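/- Fix an inner product <.,.> on R^m with induced norm |.|. Let X = (X_J, X_{~J}) with X_J and X_{~J} independent, let Y_J have the same distribution as X_J and be independent of X, and let f be measurable with f(X) square-integrable R^m-valued. Define D = Var(f(X)) and V^tot_{X_J} = D - Var(E(f(X)|X_{~J})) using the generalized variance induced by <.,.>. Then the mean square error of approximating f(X) by randomly fixing X_J satisfies E[|f(Y_J, X_{~J}) - f(X)|^2] = 2 (D - Var(E(f(X)|X_{~J}))) = 2 V^tot_{X_J}. -/

import Mathlib

/-!
Let `κ`, `ν` be the laws of `X_J`, `X_{~J}`. By independence `((Y_J, X_J), X_{~J})` has law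
`(κ ⊗ κ) ⊗ ν` and `E[f(X) | X_{~J}] = g(X_{~J})` with `g b = ∫ f(a, b) dκ(a)`. For fixed `b`,
`f(Y_J, b)` and `f(X_J, b)` are i.i.d., so the mean square error is `2 E[Var(f(X) | X_{~J})]`,
and the law of total variance identifies this expected conditional variance with
`Var f(X) - Var E[f(X) | X_{~J}]`.
-/

open MeasureTheory ProbabilityTheory

/-- The generalized variance `Var(Z) = E[‖Z - E Z‖²]` for a random vector `Z` with values in a
real inner product space with its induced norm. -/
noncomputable def gVar {Ω E : Type*} [MeasurableSpace Ω]
    [NormedAddCommGroup E] [InnerProductSpace ℝ E] [FiniteDimensional ℝ E]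
    (μ : Measure Ω) (Z : Ω → E) : ℝ :=
  ∫ ω, ‖Z ω - ∫ ω', Z ω' ∂μ‖ ^ 2 ∂μ

open RealInnerProductSpace

section gVar

variable {Ω Ω' E : Type*} [MeasurableSpace Ω] [MeasurableSpace Ω']
  [NormedAddCommGroup E] [InnerProductSpace ℝ E] [FiniteDimensional ℝ E]

lemma gVar_nonneg (μ : Measure Ω) (Z : Ω → E) : 0 ≤ gVar μ Z :=
  integral_nonneg fun _ ↦ by positivity

lemma gVar_congr_ae {μ : Measure Ω} {Z W : Ω → E} (h : Z =ᵐ[μ] W) : gVar μ Z = gVar μ W := by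
  unfold gVar
  rw [integral_congr_ae h]
  exact integral_congr_ae (h.mono fun ω hω ↦ by simp only [hω])

lemma gVar_map {μ : Measure Ω} {X : Ω → Ω'} {Z : Ω' → E} (hX : AEMeasurable X μ)
    (hZ : AEStronglyMeasurable Z (μ.map X)) : gVar (μ.map X) Z = gVar μ (Z ∘ X) := by
  unfold gVar
  rw [integral_map hX hZ, integral_map hX (by fun_prop)]
  rfl

lemma gVar_eq_integral_norm_sq_sub {μ : Measure Ω} [IsProbabilityMeasure μ] {Z : Ω → E}
    (hZ : MemLp Z 2 μ) : gVar μ Z = ∫ ω, ‖Z ω‖ ^ 2 ∂μ - ‖∫ ω, Z ω ∂μ‖ ^ 2 := by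
  unfold gVar
  set m := ∫ ω, Z ω ∂μ
  have hZint : Integrable Z μ := hZ.integrable one_le_two
  have hinner : Integrable (fun ω ↦ 2 * ⟪m, Z ω⟫) μ := (hZint.const_inner m).const_mul 2
  have hexpand (ω : Ω) : ‖Z ω - m‖ ^ 2 = ‖Z ω‖ ^ 2 - 2 * ⟪m, Z ω⟫ + ‖m‖ ^ 2 := by
    rw [norm_sub_sq_real, real_inner_comm]
  simp_rw [hexpand]
  rw [integral_add (hZ.norm.integrable_sq.sub' hinner) (integrable_const _),
    integral_sub hZ.norm.integrable_sq hinner, integral_const_mul, integral_inner hZint,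
    real_inner_self_eq_norm_sq, integral_const, probReal_univ, one_smul]
  ring

lemma norm_integral_sq_le_integral_norm_sq {μ : Measure Ω} [IsProbabilityMeasure μ] {Z : Ω → E}
    (hZ : MemLp Z 2 μ) : ‖∫ ω, Z ω ∂μ‖ ^ 2 ≤ ∫ ω, ‖Z ω‖ ^ 2 ∂μ := by
  have h := gVar_nonneg μ Z
  rw [gVar_eq_integral_norm_sq_sub hZ] at h
  linarith

lemma integral_norm_sub_sq_prod_self {μ : Measure Ω} [IsProbabilityMeasure μ] {Z : Ω → E}
    (hZ : MemLp Z 2 μ) : ∫ p, ‖Z p.1 - Z p.2‖ ^ 2 ∂(μ.prod μ) = 2 * gVar μ Z := by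
  -- After centring, the cross term integrates to `⟪W a, ∫ W⟫ = 0`.
  set W := fun ω ↦ Z ω - ∫ ω', Z ω' ∂μ
  have hW : MemLp W 2 μ := hZ.sub (memLp_const _)
  have hWint : Integrable W μ := hW.integrable one_le_two
  have hWmean : ∫ ω, W ω ∂μ = 0 := by
    rw [integral_sub (hZ.integrable one_le_two) (integrable_const _), integral_const,
      probReal_univ, one_smul, sub_self]
  have hcross : Integrable (fun p : Ω × Ω ↦ 2 * ⟪W p.1, W p.2⟫) (μ.prod μ) :=
    (hWint.op_fst_snd (op := fun x y : E ↦ ⟪x, y⟫) (continuous_inner (𝕜 := ℝ) (E := E))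
      ⟨1, fun x y ↦ by simpa using norm_inner_le_norm (𝕜 := ℝ) x y⟩ hWint).const_mul 2
  have hexpand (p : Ω × Ω) :
      ‖Z p.1 - Z p.2‖ ^ 2 = ‖W p.1‖ ^ 2 + ‖W p.2‖ ^ 2 - 2 * ⟪W p.1, W p.2⟫ := by
    have : Z p.1 - Z p.2 = W p.1 - W p.2 := by simp only [W, sub_sub_sub_cancel_right]
    rw [this, norm_sub_sq_real]
    ring
  have h1 : Integrable (fun p : Ω × Ω ↦ ‖W p.1‖ ^ 2) (μ.prod μ) := hW.norm.integrable_sq.comp_fst μ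
  have h2 : Integrable (fun p : Ω × Ω ↦ ‖W p.2‖ ^ 2) (μ.prod μ) := hW.norm.integrable_sq.comp_snd μ
  simp_rw [hexpand]
  rw [integral_sub (h1.fun_add h2) hcross, integral_add h1 h2, integral_prod _ hcross]
  simp only [integral_const_mul, integral_inner hWint, hWmean, inner_zero_right, mul_zero,
    integral_zero, sub_zero, integral_fun_fst (fun ω ↦ ‖W ω‖ ^ 2),
    integral_fun_snd (fun ω ↦ ‖W ω‖ ^ 2), probReal_univ, one_smul]
  unfold gVar
  ring

end gVar

lemma MeasureTheory.MemLp.prod_left_ae {α β F : Type*} [MeasurableSpace α] [MeasurableSpace β]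
    [NormedAddCommGroup F] {κ : Measure α} {ν : Measure β} [SFinite κ] [SFinite ν]
    {f : α × β → F} (hf : MemLp f 2 (κ.prod ν)) :
    ∀ᵐ b ∂ν, MemLp (fun a ↦ f (a, b)) 2 κ := by
  filter_upwards [hf.aestronglyMeasurable.prodMk_right, hf.norm.integrable_sq.prod_left_ae]
    with b hmeas hsq
  exact (memLp_two_iff_integrable_sq_norm hmeas).mpr hsq

section prod

variable {α β E : Type*} [MeasurableSpace α] [MeasurableSpace β]
  [NormedAddCommGroup E] [InnerProductSpace ℝ E] [FiniteDimensional ℝ E]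
  {κ : Measure α} {ν : Measure β} {f : α × β → E}

lemma MeasureTheory.MemLp.integral_prod_right [IsProbabilityMeasure κ] [SFinite ν]
    (hf : MemLp f 2 (κ.prod ν)) :
    MemLp (fun b ↦ ∫ a, f (a, b) ∂κ) 2 ν := by
  have hmeas : AEStronglyMeasurable (fun b ↦ ∫ a, f (a, b) ∂κ) ν :=
    hf.aestronglyMeasurable.prod_swap.integral_prod_right'
  refine (memLp_two_iff_integrable_sq_norm hmeas).mpr
    (hf.norm.integrable_sq.integral_prod_right.mono' (hmeas.norm.pow 2) ?_)
  filter_upwards [hf.prod_left_ae] with b hb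
  rw [Real.norm_of_nonneg (by positivity)]
  exact norm_integral_sq_le_integral_norm_sq hb

lemma gVar_prod_eq_integral_gVar_add [IsProbabilityMeasure κ] [IsProbabilityMeasure ν]
    (hf : MemLp f 2 (κ.prod ν)) :
    gVar (κ.prod ν) f
      = ∫ b, gVar κ (fun a ↦ f (a, b)) ∂ν + gVar ν (fun b ↦ ∫ a, f (a, b) ∂κ) := by
  have hsq : Integrable (fun p ↦ ‖f p‖ ^ 2) (κ.prod ν) := hf.norm.integrable_sq
  have hg := hf.integral_prod_right
  have hslice : (fun b ↦ gVar κ (fun a ↦ f (a, b)))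
      =ᵐ[ν] fun b ↦ ∫ a, ‖f (a, b)‖ ^ 2 ∂κ - ‖∫ a, f (a, b) ∂κ‖ ^ 2 := by
    filter_upwards [hf.prod_left_ae] with b hb
    exact gVar_eq_integral_norm_sq_sub hb
  rw [integral_congr_ae hslice, integral_sub hsq.integral_prod_right hg.norm.integrable_sq,
    gVar_eq_integral_norm_sq_sub hf, gVar_eq_integral_norm_sq_sub hg,
    ← integral_prod_symm _ hsq, ← integral_prod_symm _ (hf.integrable one_le_two)]
  ring

lemma integral_norm_sub_sq_prod_prod [IsProbabilityMeasure κ] [IsProbabilityMeasure ν]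
    (hf : MemLp f 2 (κ.prod ν)) :
    ∫ q, ‖f (q.1.1, q.2) - f (q.1.2, q.2)‖ ^ 2 ∂((κ.prod κ).prod ν)
      = 2 * ∫ b, gVar κ (fun a ↦ f (a, b)) ∂ν := by
  have hfst : MemLp (fun q : (α × α) × β ↦ f (q.1.1, q.2)) 2 ((κ.prod κ).prod ν) :=
    hf.comp_measurePreserving (measurePreserving_fst.prod (MeasurePreserving.id ν))
  have hsnd : MemLp (fun q : (α × α) × β ↦ f (q.1.2, q.2)) 2 ((κ.prod κ).prod ν) :=
    hf.comp_measurePreserving (measurePreserving_snd.prod (MeasurePreserving.id ν))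
  have hint : Integrable (fun q ↦ ‖f (q.1.1, q.2) - f (q.1.2, q.2)‖ ^ 2) ((κ.prod κ).prod ν) :=
    (hfst.sub hsnd).norm.integrable_sq
  rw [integral_prod_symm _ hint, ← integral_const_mul]
  refine integral_congr_ae ?_
  filter_upwards [hf.prod_left_ae] with b hb
  exact integral_norm_sub_sq_prod_self hb

end prod

lemma ProbabilityTheory.IndepFun.condExp_comp_prodMk_ae_eq {Ω α β E : Type*}
    [MeasurableSpace Ω] [MeasurableSpace α] [MeasurableSpace β]
    [NormedAddCommGroup E] [NormedSpace ℝ E] [CompleteSpace E]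
    {μ : Measure Ω} [IsProbabilityMeasure μ] {X : Ω → α} {W : Ω → β}
    (hX : Measurable X) (hW : Measurable W) (hXW : IndepFun X W μ)
    {f : α × β → E} (hf : StronglyMeasurable f) (hfi : Integrable (fun ω ↦ f (X ω, W ω)) μ) :
    μ[fun ω ↦ f (X ω, W ω) | MeasurableSpace.comap W inferInstance]
      =ᵐ[μ] fun ω ↦ ∫ a, f (a, W ω) ∂(μ.map X) := by
  set g : β → E := fun b ↦ ∫ a, f (a, b) ∂(μ.map X)
  have hXW_map : μ.map (fun ω ↦ (X ω, W ω)) = (μ.map X).prod (μ.map W) :=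
    (indepFun_iff_map_prod_eq_prod_map_map hX.aemeasurable hW.aemeasurable).mp hXW
  have hfπ : Integrable f ((μ.map X).prod (μ.map W)) := by
    rw [← hXW_map]
    exact (integrable_map_measure hf.aestronglyMeasurable (hX.prodMk hW).aemeasurable).mpr hfi
  have hg : StronglyMeasurable g := hf.integral_prod_left'
  have hgW : Integrable (g ∘ W) μ :=
    (integrable_map_measure hg.aestronglyMeasurable hW.aemeasurable).mp hfπ.integral_prod_right
  refine (ae_eq_condExp_of_forall_setIntegral_eq hW.comap_le hfi
    (fun s _ _ ↦ hgW.integrableOn) ?_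
    (hg.comp_measurable (Measurable.of_comap_le le_rfl)).aestronglyMeasurable).symm
  rintro _ ⟨t, ht, rfl⟩ -
  have hpre : W ⁻¹' t = (fun ω ↦ (X ω, W ω)) ⁻¹' (Set.univ ×ˢ t) := by ext; simp
  have hrestrict : ((μ.map X).prod (μ.map W)).restrict (Set.univ ×ˢ t)
      = (μ.map X).prod ((μ.map W).restrict t) := by
    rw [← Measure.prod_restrict, Measure.restrict_univ]
  calc ∫ ω in W ⁻¹' t, g (W ω) ∂μ = ∫ b in t, g b ∂(μ.map W) :=
        (setIntegral_map ht hg.aestronglyMeasurable hW.aemeasurable).symm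
    _ = ∫ p in Set.univ ×ˢ t, f p ∂((μ.map X).prod (μ.map W)) := by
        rw [hrestrict, integral_prod_symm _ (hrestrict ▸ hfπ.restrict)]
    _ = ∫ ω in W ⁻¹' t, f (X ω, W ω) ∂μ := by
        rw [hpre, ← hXW_map, setIntegral_map (MeasurableSet.univ.prod ht)
          hf.aestronglyMeasurable (hX.prodMk hW).aemeasurable]

/-- Mean square error of randomly fixing `X_J`: for `X = (X_J, X_{~J})` with independent
subvectors, `Y_J` an independent copy of `X_J` independent of `X`, and `f(X)` square-integrable
with values in `ℝᵐ` with an arbitrary inner product,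
`E[‖f(Y_J, X_{~J}) - f(X)‖²] = 2 (Var(f(X)) - Var(E(f(X)|X_{~J}))) = 2 V^tot_{X_J}`. -/
theorem mse_of_fixing_randomly
    {Ω α β E : Type*} [MeasurableSpace Ω] [MeasurableSpace α] [MeasurableSpace β]
    [NormedAddCommGroup E] [InnerProductSpace ℝ E] [FiniteDimensional ℝ E]
    [MeasurableSpace E] [BorelSpace E]
    (μ : Measure Ω) [IsProbabilityMeasure μ]
    (XJ YJ : Ω → α) (XnJ : Ω → β)
    (hXJ : Measurable XJ) (hYJ : Measurable YJ) (hXnJ : Measurable XnJ)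
    (hindep : IndepFun XJ XnJ μ)
    (hYid : IdentDistrib YJ XJ μ μ)
    (hYindep : IndepFun YJ (fun ω => (XJ ω, XnJ ω)) μ)
    (f : α × β → E) (hf : Measurable f)
    (hf2 : MemLp (fun ω => f (XJ ω, XnJ ω)) 2 μ) :
    ∫ ω, ‖f (YJ ω, XnJ ω) - f (XJ ω, XnJ ω)‖ ^ 2 ∂μ
      = 2 * (gVar μ (fun ω => f (XJ ω, XnJ ω))
          - gVar μ (μ[(fun ω => f (XJ ω, XnJ ω)) | MeasurableSpace.comap XnJ inferInstance])) := by
  set κ := μ.map XJ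
  set ν := μ.map XnJ
  have : IsProbabilityMeasure κ := Measure.isProbabilityMeasure_map hXJ.aemeasurable
  have : IsProbabilityMeasure ν := Measure.isProbabilityMeasure_map hXnJ.aemeasurable
  have hX : AEMeasurable (fun ω ↦ (XJ ω, XnJ ω)) μ := (hXJ.prodMk hXnJ).aemeasurable
  have hX_map : μ.map (fun ω ↦ (XJ ω, XnJ ω)) = κ.prod ν :=
    (indepFun_iff_map_prod_eq_prod_map_map hXJ.aemeasurable hXnJ.aemeasurable).mp hindep
  have hYX_map : μ.map (fun ω ↦ ((YJ ω, XJ ω), XnJ ω)) = (κ.prod κ).prod ν := by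
    have hYX := (indepFun_iff_map_prod_eq_prod_map_map hYJ.aemeasurable hX).mp hYindep
    rw [hYid.map_eq, hX_map] at hYX
    rw [← (measurePreserving_prodAssoc κ κ ν).symm.map_eq, ← hYX,
      Measure.map_map (by fun_prop) (hYJ.prodMk (hXJ.prodMk hXnJ))]
    rfl
  have hfπ : MemLp f 2 (κ.prod ν) := by
    rw [← hX_map]
    exact (memLp_map_measure_iff hf.aestronglyMeasurable hX).mpr hf2
  have hcond := hindep.condExp_comp_prodMk_ae_eq hXJ hXnJ hf.stronglyMeasurable
    (hf2.integrable one_le_two)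
  calc ∫ ω, ‖f (YJ ω, XnJ ω) - f (XJ ω, XnJ ω)‖ ^ 2 ∂μ
      = ∫ q, ‖f (q.1.1, q.2) - f (q.1.2, q.2)‖ ^ 2 ∂((κ.prod κ).prod ν) := by
        rw [← hYX_map, integral_map ((hYJ.prodMk hXJ).prodMk hXnJ).aemeasurable (by fun_prop)]
    _ = 2 * ∫ b, gVar κ (fun a ↦ f (a, b)) ∂ν := integral_norm_sub_sq_prod_prod hfπ
    _ = 2 * (gVar (κ.prod ν) f - gVar ν (fun b ↦ ∫ a, f (a, b) ∂κ)) := by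
        rw [gVar_prod_eq_integral_gVar_add hfπ]
        ring
    _ = _ := by
        rw [gVar_congr_ae hcond, ← hX_map, gVar_map hX hf.aestronglyMeasurable,
          gVar_map hXnJ.aemeasurable hfπ.integral_prod_right.aestronglyMeasurable]
        rfl
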